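/- Let X be a Banach space with cotype s ∈ [2,∞), i.e. there is C with (∑_i ‖x_i‖^s)^{1/s} ≤ C (E‖∑_i ε_i x_i‖²)^{1/2} for all finite families, where ε_i are Rademacher variables. Then every weakly 1-summable sequence in X is norm s-summable: if sup_{φ ∈ B_{X*}} ∑_j |φ(x_j)| < ∞, then ∑_j ‖x_j‖^s < ∞. -/
import Mathlib


/-- In a Banach space of cotype `s`, every weakly `1`-summable sequence is norm
`s`-summable (the identity is absolutely `(s;1)`-summing). -/
theorem stmt_13 (X : Type*) [NormedAddCommGroup X] [NormedSpace ℝ X] [CompleteSpace X]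
    (s : ℝ) (hs : 2 ≤ s)
    (hcotype : ∃ C : ℝ, 0 < C ∧ ∀ (N : ℕ) (x : Fin N → X),
      (∑ i, ‖x i‖ ^ s) ^ (1 / s) ≤
        C * ((∑ ε : Fin N → Bool,
          ‖∑ i, (if ε i then (1 : ℝ) else -1) • x i‖ ^ 2) / 2 ^ N) ^ (1 / 2 : ℝ))
    (x : ℕ → X)
    (hweak : ∃ M : ℝ, ∀ φ : X →L[ℝ] ℝ, ‖φ‖ ≤ 1 →
      Summable (fun j => |φ (x j)|) ∧ (∑' j, |φ (x j)|) ≤ M) :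
    Summable (fun j => ‖x j‖ ^ s) := by
  obtain ⟨C, hC, hcot⟩ := hcotype
  obtain ⟨M, hM⟩ := hweak
  have hM0 : 0 ≤ M := by
    have h := hM 0 (by simp)
    simpa using h.2
  have hs0 : 0 < s := lt_of_lt_of_le two_pos hs
  -- finite sums of |f (x j)| are bounded by M * ‖f‖
  have hsum : ∀ (f : X →L[ℝ] ℝ) (F : Finset ℕ), ∑ j ∈ F, |f (x j)| ≤ M * ‖f‖ := by
    intro f F
    rcases eq_or_ne f 0 with rfl | hf
    · simp
    · have hfn : 0 < ‖f‖ := norm_pos_iff.mpr hf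
      set g : X →L[ℝ] ℝ := ‖f‖⁻¹ • f with hg
      have hgn : ‖g‖ ≤ 1 := by
        have : ‖g‖ = ‖f‖⁻¹ * ‖f‖ := by
          rw [hg, norm_smul ‖f‖⁻¹ f]
          simp [abs_of_nonneg (inv_nonneg.mpr hfn.le)]
        rw [this, inv_mul_cancel₀ hfn.ne']
      obtain ⟨hg1, hg2⟩ := hM g hgn
      have h1 : ∑ j ∈ F, |g (x j)| ≤ M :=
        le_trans (Summable.sum_le_tsum F (fun j _ => abs_nonneg _) hg1) hg2
      have h2 : ∀ j, |f (x j)| = ‖f‖ * |g (x j)| := by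
        intro j
        rw [hg]
        simp only [ContinuousLinearMap.smul_apply, smul_eq_mul, abs_mul,
          abs_of_nonneg (inv_nonneg.mpr hfn.le)]
        field_simp
      calc ∑ j ∈ F, |f (x j)| = ‖f‖ * ∑ j ∈ F, |g (x j)| := by
            rw [Finset.mul_sum]; exact Finset.sum_congr rfl fun j _ => h2 j
        _ ≤ ‖f‖ * M := by
            exact mul_le_mul_of_nonneg_left h1 hfn.le
        _ = M * ‖f‖ := mul_comm _ _
  have key : ∀ (N : ℕ) (ε : Fin N → Bool),
      ‖∑ i, (if ε i then (1:ℝ) else -1) • x i‖ ≤ M := by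
    intro N ε
    apply NormedSpace.norm_le_dual_bound ℝ _ hM0
    intro f
    have hmap : f (∑ i, (if ε i then (1:ℝ) else -1) • x i)
        = ∑ i, (if ε i then (1:ℝ) else -1) * f (x i) := by
      rw [map_sum]
      refine Finset.sum_congr rfl fun i _ => ?_
      cases ε i <;> simp
    rw [Real.norm_eq_abs, hmap]
    calc |∑ i : Fin N, (if ε i then (1:ℝ) else -1) * f (x i)|
        ≤ ∑ i : Fin N, |(if ε i then (1:ℝ) else -1) * f (x i)| :=
          Finset.abs_sum_le_sum_abs _ _
      _ = ∑ i : Fin N, |f (x i)| := by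
          apply Finset.sum_congr rfl; intro i _
          rw [abs_mul]; cases ε i <;> simp
      _ ≤ M * ‖f‖ := by
          have h := hsum f (Finset.range N)
          rwa [← Fin.sum_univ_eq_sum_range (fun j => |f (x j)|) N] at h
  have bound : ∀ N, ∑ i ∈ Finset.range N, ‖x i‖ ^ s ≤ (C * M) ^ s := by
    intro N
    have h1 := hcot N (fun i => x i)
    have h2 : ((∑ ε : Fin N → Bool, ‖∑ i, (if ε i then (1:ℝ) else -1) • x i‖ ^ 2)
        / 2 ^ N) ≤ M ^ 2 := by
      rw [div_le_iff₀ (by positivity)]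
      calc ∑ ε : Fin N → Bool, ‖∑ i, (if ε i then (1:ℝ) else -1) • x i‖ ^ 2
          ≤ ∑ _ε : Fin N → Bool, M ^ 2 := Finset.sum_le_sum fun ε _ =>
            pow_le_pow_left₀ (norm_nonneg _) (key N ε) 2
        _ = M ^ 2 * 2 ^ N := by
            simp [Finset.sum_const, Finset.card_univ, mul_comm]
    have h3 : ((∑ ε : Fin N → Bool, ‖∑ i, (if ε i then (1:ℝ) else -1) • x i‖ ^ 2)
        / 2 ^ N) ^ (1 / 2 : ℝ) ≤ M := by
      have := Real.rpow_le_rpow (by positivity) h2 (by norm_num : (0:ℝ) ≤ 1/2)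
      calc _ ≤ (M ^ 2 : ℝ) ^ (1/2 : ℝ) := this
        _ = M := by
            rw [← Real.rpow_natCast M 2, ← Real.rpow_mul hM0]
            norm_num
    have h4 : (∑ i : Fin N, ‖x i‖ ^ s) ^ (1 / s) ≤ C * M :=
      h1.trans (mul_le_mul_of_nonneg_left h3 hC.le)
    have h5 : (∑ i : Fin N, ‖x i‖ ^ s) ≤ (C * M) ^ s := by
      have hnn : (0:ℝ) ≤ ∑ i : Fin N, ‖x i‖ ^ s := by positivity
      have := Real.rpow_le_rpow (by positivity) h4 hs0.le
      rwa [← Real.rpow_mul hnn, one_div, inv_mul_cancel₀ hs0.ne', Real.rpow_one] at this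
    rwa [← Fin.sum_univ_eq_sum_range (fun j => ‖x j‖ ^ s) N]
  exact summable_of_sum_range_le (fun n => by positivity) bound
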